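/- Let R be a commutative ring with 1 and let A be an n × m matrix over R (n, m ≥ 1) whose entries generate the unit ideal of R. If every 2 × 2 minor of A vanishes, then any two primitive vectors of Rⁿ obtained as R-linear combinations of the columns of A agree up to multiplication by a unit: if v₁ = A.mulVec c₁ and v₂ = A.mulVec c₂ are both primitive, then there exists a unit u ∈ Rˣ with v₂ = u • v₁. -/
import Mathlib

private theorem minors_key {R : Type*} [CommRing R] {n m : ℕ}
    (A : Matrix (Fin n) (Fin m) R)
    (hminor : ∀ i j : Fin n, ∀ k l : Fin m, A i k * A j l - A i l * A j k = 0)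
    (c₁ c₂ : Fin m → R) (i j : Fin n) :
    A.mulVec c₁ i * A.mulVec c₂ j = A.mulVec c₂ i * A.mulVec c₁ j := by
  simp only [Matrix.mulVec, dotProduct]
  rw [Finset.sum_mul_sum, Finset.sum_mul_sum, Finset.sum_comm]
  refine Finset.sum_congr rfl fun k _ => Finset.sum_congr rfl fun l _ => ?_
  linear_combination (-(c₁ l * c₂ k)) * hminor i j k l

/-- If all `2 × 2` minors of a matrix `A` with primitive entries vanish, then any two
primitive vectors obtained as linear combinations of the columns of `A` agree up to a unit. -/
theorem minors_vanish_primitive_combinations_unit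
    {R : Type*} [CommRing R] {n m : ℕ} (hn : 1 ≤ n) (hm : 1 ≤ m)
    (A : Matrix (Fin n) (Fin m) R)
    (hA : Ideal.span (Set.range fun q : Fin n × Fin m => A q.1 q.2) = ⊤)
    (hminor : ∀ i j : Fin n, ∀ k l : Fin m, A i k * A j l - A i l * A j k = 0)
    (c₁ c₂ : Fin m → R)
    (h₁ : Ideal.span (Set.range (A.mulVec c₁)) = ⊤)
    (h₂ : Ideal.span (Set.range (A.mulVec c₂)) = ⊤) :
    ∃ u : Rˣ, A.mulVec c₂ = (u : R) • A.mulVec c₁ := by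
  set v₁ := A.mulVec c₁ with hv₁
  set v₂ := A.mulVec c₂ with hv₂
  have key : ∀ i j, v₁ i * v₂ j = v₂ i * v₁ j := minors_key A hminor c₁ c₂
  have mem1 : (1 : R) ∈ Ideal.span (Set.range v₁) := by rw [h₁]; trivial
  have mem2 : (1 : R) ∈ Ideal.span (Set.range v₂) := by rw [h₂]; trivial
  obtain ⟨x, hx⟩ := (Submodule.mem_span_range_iff_exists_fun R).mp mem1
  obtain ⟨y, hy⟩ := (Submodule.mem_span_range_iff_exists_fun R).mp mem2
  simp only [smul_eq_mul] at hx hy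
  set u := ∑ i, x i * v₂ i with hu
  set t := ∑ j, y j * v₁ j with ht
  have hut : u * t = 1 := by
    calc u * t = ∑ i, ∑ j, x i * v₂ i * (y j * v₁ j) := by
          rw [hu, ht, Finset.sum_mul_sum]
      _ = ∑ i, ∑ j, x i * v₁ i * (y j * v₂ j) := by
          refine Finset.sum_congr rfl fun i _ => Finset.sum_congr rfl fun j _ => ?_
          linear_combination (-(x i * y j)) * key i j
      _ = (∑ i, x i * v₁ i) * ∑ j, y j * v₂ j := by rw [Finset.sum_mul_sum]
      _ = 1 := by rw [hx, hy, one_mul]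
  refine ⟨Units.mkOfMulEqOne u t hut, ?_⟩
  funext j
  have : v₂ j = (∑ i, x i * v₁ i) * v₂ j := by rw [hx, one_mul]
  calc v₂ j = ∑ i, x i * v₁ i * v₂ j := by rw [← Finset.sum_mul, hx, one_mul]
    _ = ∑ i, x i * v₂ i * v₁ j := by
        refine Finset.sum_congr rfl fun i _ => ?_
        linear_combination x i * key i j
    _ = u * v₁ j := by rw [hu, Finset.sum_mul]
    _ = ((Units.mkOfMulEqOne u t hut : Rˣ) : R) • v₁ j := rfl
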